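/- Let f be a homeomorphism of a compact metric space M with two fixed points p₁ (a 'repeller') and p₂ (an 'attractor'), and assume there is a nonempty open set V ⊆ M such that fⁿ(x) → p₂ and f⁻ⁿ(x) → p₁ uniformly on V as n → ∞. Then for every ε > 0 there is a nonempty open subset V_ε ⊆ V such that d(fⁿ(x), fⁿ(y)) < ε for all x, y ∈ V_ε and all n ∈ ℤ. In particular f does not have sensitivity to initial conditions. -/

import Mathlib

/-!
For `|n| ≥ k` uniform convergence puts `fⁿ(V)` inside an `ε / 2`-ball around `p₂` or `p₁`;
the finitely many iterates with `|n| < k` are continuous, so a small enough open piece of `V`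
is kept `ε`-thin by them as well. A nonempty open set on which all orbits stay `ε`-close
rules out sensitivity with constant `ε`.
-/

open Metric

theorem Homeomorph.toEquiv_zpow {X : Type*} [TopologicalSpace X] (f : X ≃ₜ X) (n : ℤ) :
    (f ^ n).toEquiv = f.toEquiv ^ n :=
  map_zpow ({ toFun := Homeomorph.toEquiv, map_one' := rfl, map_mul' := fun _ _ => rfl } :
    (X ≃ₜ X) →* Equiv.Perm X) f n

theorem Homeomorph.continuous_toEquiv_zpow {X : Type*} [TopologicalSpace X] (f : X ≃ₜ X)
    (n : ℤ) : Continuous (f.toEquiv ^ n) :=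
  f.toEquiv_zpow n ▸ (f ^ n).continuous

theorem exists_isOpen_subset_forall_dist_lt {ι X Y : Type*} [TopologicalSpace X]
    [PseudoMetricSpace Y] {F : ι → X → Y} (hF : ∀ i, Continuous (F i)) {V : Set X}
    (hVo : IsOpen V) (hVne : V.Nonempty) {ε : ℝ} (hε : 0 < ε) (S : Finset ι)
    (hS : ∀ i ∉ S, ∀ x ∈ V, ∀ y ∈ V, dist (F i x) (F i y) < ε) :
    ∃ W ⊆ V, IsOpen W ∧ W.Nonempty ∧ ∀ x ∈ W, ∀ y ∈ W, ∀ i, dist (F i x) (F i y) < ε := by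
  obtain ⟨x₀, hx₀⟩ := hVne
  -- keep the points whose images under the finitely many maps of `S` stay `ε / 2`-close
  -- to those of `x₀`
  refine ⟨V ∩ ⋂ i ∈ S, F i ⁻¹' ball (F i x₀) (ε / 2), Set.inter_subset_left,
    hVo.inter (isOpen_biInter_finset fun i _ => isOpen_ball.preimage (hF i)),
    ⟨x₀, hx₀, Set.mem_iInter₂.2 fun i _ => mem_ball_self (half_pos hε)⟩, ?_⟩
  rintro x ⟨hxV, hx⟩ y ⟨hyV, hy⟩ i
  rw [Set.mem_iInter₂] at hx hy
  by_cases hi : i ∈ S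
  · have hxi : dist (F i x) (F i x₀) < ε / 2 := hx i hi
    have hyi : dist (F i y) (F i x₀) < ε / 2 := hy i hi
    linarith [dist_triangle_right (F i x) (F i y) (F i x₀)]
  · exact hS i hi x hxV y hyV

theorem stmt_10_general {M : Type*} [MetricSpace M]
    (f : M ≃ₜ M) (p₁ p₂ : M)
    (V : Set M) (hVo : IsOpen V) (hVne : V.Nonempty)
    (hconv : ∀ ε > (0:ℝ), ∃ k : ℕ, 1 ≤ k ∧ ∀ j : ℕ, k ≤ j → ∀ x ∈ V,
      dist ((f.toEquiv ^ (j : ℤ)) x) p₂ < ε ∧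
      dist ((f.toEquiv ^ (-(j : ℤ))) x) p₁ < ε) :
    (∀ ε > (0:ℝ), ∃ Vε : Set M, Vε ⊆ V ∧ IsOpen Vε ∧ Vε.Nonempty ∧
      ∀ x ∈ Vε, ∀ y ∈ Vε, ∀ n : ℤ,
        dist ((f.toEquiv ^ n) x) ((f.toEquiv ^ n) y) < ε) ∧
    ¬ (∃ ε > (0:ℝ), ∀ x : M, ∀ δ > (0:ℝ), ∃ y : M, dist x y < δ ∧
        ∃ k : ℤ, ε < dist ((f.toEquiv ^ k) x) ((f.toEquiv ^ k) y)) := by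
  have stable : ∀ ε > (0:ℝ), ∃ Vε : Set M, Vε ⊆ V ∧ IsOpen Vε ∧ Vε.Nonempty ∧
      ∀ x ∈ Vε, ∀ y ∈ Vε, ∀ n : ℤ, dist ((f.toEquiv ^ n) x) ((f.toEquiv ^ n) y) < ε := by
    intro ε hε
    obtain ⟨k, -, hk⟩ := hconv (ε / 2) (half_pos hε)
    refine exists_isOpen_subset_forall_dist_lt f.continuous_toEquiv_zpow hVo hVne hε
      (Finset.Icc (-k : ℤ) k) fun n hn x hx y hy => ?_
    rw [Finset.mem_Icc] at hn
    obtain ⟨j, rfl | rfl⟩ := n.eq_nat_or_neg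
    · have hxj := (hk j (by omega) x hx).1
      have hyj := (hk j (by omega) y hy).1
      linarith [dist_triangle_right ((f.toEquiv ^ (j : ℤ)) x) ((f.toEquiv ^ (j : ℤ)) y) p₂]
    · have hxj := (hk j (by omega) x hx).2
      have hyj := (hk j (by omega) y hy).2
      linarith [dist_triangle_right ((f.toEquiv ^ (-j : ℤ)) x) ((f.toEquiv ^ (-j : ℤ)) y) p₁]
  refine ⟨stable, fun ⟨ε, hε, hsens⟩ => ?_⟩
  obtain ⟨W, -, hWo, ⟨x, hx⟩, hW⟩ := stable ε hε
  obtain ⟨δ, hδ, hball⟩ := isOpen_iff.mp hWo x hx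
  obtain ⟨y, hxy, k, hk⟩ := hsens x δ hδ
  have hy : y ∈ W := hball (mem_ball'.2 hxy)
  exact (hW x hx y hy k).not_gt hk

theorem stmt_10 {M : Type*} [MetricSpace M] [CompactSpace M]
    (f : M ≃ₜ M) (p₁ p₂ : M) (hp₁ : f p₁ = p₁) (hp₂ : f p₂ = p₂)
    (V : Set M) (hVo : IsOpen V) (hVne : V.Nonempty)
    (hconv : ∀ ε > (0:ℝ), ∃ k : ℕ, 1 ≤ k ∧ ∀ j : ℕ, k ≤ j → ∀ x ∈ V,
      dist ((f.toEquiv ^ (j : ℤ)) x) p₂ < ε ∧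
      dist ((f.toEquiv ^ (-(j : ℤ))) x) p₁ < ε) :
    (∀ ε > (0:ℝ), ∃ Vε : Set M, Vε ⊆ V ∧ IsOpen Vε ∧ Vε.Nonempty ∧
      ∀ x ∈ Vε, ∀ y ∈ Vε, ∀ n : ℤ,
        dist ((f.toEquiv ^ n) x) ((f.toEquiv ^ n) y) < ε) ∧
    ¬ (∃ ε > (0:ℝ), ∀ x : M, ∀ δ > (0:ℝ), ∃ y : M, dist x y < δ ∧
        ∃ k : ℤ, ε < dist ((f.toEquiv ^ k) x) ((f.toEquiv ^ k) y)) :=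
  stmt_10_general f p₁ p₂ V hVo hVne hconv
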